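/- Let n ∈ {2,3} and let T ∈ M_n(ℤ) have characteristic polynomial irreducible over ℤ. Assume that for every j with 1 ≤ j ≤ n, the matrix T^j is not conjugate (over ℝ) to a similarity matrix. Then for every eigenvalue λ ∈ ℂ of T and every integer m ≥ 1, the real number |λ|^m is irrational. -/

import Mathlib

open Filter MeasureTheory Metric Set Matrix
open scoped Topology ENNReal NNReal

noncomputable section

namespace FracPert

/-- View a plain vector as a point of Euclidean space. -/
def euc {n : ℕ} (v : Fin n → ℝ) : EuclideanSpace ℝ (Fin n) := WithLp.toLp 2 v

/-- The real matrix associated with an integer matrix. -/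
def intMat {n : ℕ} (T : Matrix (Fin n) (Fin n) ℤ) : Matrix (Fin n) (Fin n) ℝ :=
  T.map fun x => (x : ℝ)

/-- An integer vector as a real vector. -/
def zVec {n : ℕ} (v : Fin n → ℤ) : Fin n → ℝ := fun i => (v i : ℝ)

/-- An integer matrix is expanding if all of its complex eigenvalues have modulus `> 1`. -/
def IsExpandingZ {n : ℕ} (T : Matrix (Fin n) (Fin n) ℤ) : Prop :=
  ∀ μ : ℂ, (T.map fun x => (x : ℂ)).charpoly.IsRoot μ → 1 < ‖μ‖

/-- A real matrix is expanding if all of its complex eigenvalues have modulus `> 1`. -/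
def IsExpandingR {n : ℕ} (T : Matrix (Fin n) (Fin n) ℝ) : Prop :=
  ∀ μ : ℂ, (T.map fun x => (x : ℂ)).charpoly.IsRoot μ → 1 < ‖μ‖

/-- `F` is the self-affine set generated by the real matrix `M` and the digit set `A`:
`F` is nonempty, compact, and `F = ⋃_{a ∈ A} M⁻¹ (F + a)`. -/
def IsSelfAffineR {n : ℕ} (M : Matrix (Fin n) (Fin n) ℝ) (A : Set (Fin n → ℝ))
    (F : Set (EuclideanSpace ℝ (Fin n))) : Prop :=
  F.Nonempty ∧ IsCompact F ∧
    F = ⋃ a ∈ A, (fun x : EuclideanSpace ℝ (Fin n) => euc (M⁻¹ *ᵥ (x + euc a))) '' F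

/-- Integral self-affine set. -/
def IsSelfAffineZ {n : ℕ} (T : Matrix (Fin n) (Fin n) ℤ) (A : Set (Fin n → ℤ))
    (F : Set (EuclideanSpace ℝ (Fin n))) : Prop :=
  IsSelfAffineR (intMat T) (zVec '' A) F

/-- The iterated digit sets `A_k = {∑_{i=1}^k T^{k-i} a_i : a_i ∈ A}`. -/
def digitSetIter {n : ℕ} (T : Matrix (Fin n) (Fin n) ℤ) (A : Set (Fin n → ℤ)) (k : ℕ) :
    Set (Fin n → ℤ) :=
  { v | ∃ a : Fin k → Fin n → ℤ, (∀ i, a i ∈ A) ∧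
      v = ∑ i : Fin k, (T ^ (k - 1 - (i : ℕ))) *ᵥ a i }

/-- The iterated digit sets for a real matrix. -/
def digitSetIterR {n : ℕ} (J : Matrix (Fin n) (Fin n) ℝ) (A : Set (Fin n → ℝ)) (k : ℕ) :
    Set (Fin n → ℝ) :=
  { v | ∃ a : Fin k → Fin n → ℝ, (∀ i, a i ∈ A) ∧
      v = ∑ i : Fin k, (J ^ (k - 1 - (i : ℕ))) *ᵥ a i }

/-- The signed floor. -/
def sfloor (t : ℝ) : ℤ := if 0 ≤ t then ⌊t⌋ else -⌊|t|⌋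

/-- The signed ceiling. -/
def sceil (t : ℝ) : ℤ := if 0 ≤ t then ⌈t⌉ else -⌈|t|⌉

/-- Entrywise signed floor of a vector. -/
def sfloorVec {n : ℕ} (v : Fin n → ℝ) : Fin n → ℤ := fun i => sfloor (v i)

/-- The perturbed matrix `T_k`: the entrywise signed ceiling of `J^k`. -/
def pertMat {n : ℕ} (J : Matrix (Fin n) (Fin n) ℝ) (k : ℕ) : Matrix (Fin n) (Fin n) ℤ :=
  Matrix.of fun i j => sceil ((J ^ k) i j)

/-- A real Jordan block for a real eigenvalue: lower triangular, `lam` on the diagonal,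
`1` on the subdiagonal. -/
def realJordanBlock (d : ℕ) (lam : ℝ) : Matrix (Fin d) (Fin d) ℝ :=
  Matrix.of fun i j =>
    if (i : ℕ) = (j : ℕ) then lam else if (i : ℕ) = (j : ℕ) + 1 then 1 else 0

/-- A real Jordan block for a non-real eigenvalue `a + b i`, made of `2 × 2` blocks:
`C = [[a, -b], [b, a]]` on the block diagonal and `I₂` on the block subdiagonal. -/
def complexJordanBlock (m : ℕ) (a b : ℝ) : Matrix (Fin (2 * m)) (Fin (2 * m)) ℝ :=
  Matrix.of fun i j =>
    if (i : ℕ) / 2 = (j : ℕ) / 2 then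
      (if (i : ℕ) % 2 = (j : ℕ) % 2 then a else if (i : ℕ) % 2 = 0 then -b else b)
    else if (i : ℕ) / 2 = (j : ℕ) / 2 + 1 then
      (if (i : ℕ) % 2 = (j : ℕ) % 2 then 1 else 0)
    else 0

/-- `B` is a real Jordan-type block with eigenvalue modulus `ρ` and algebraic multiplicity
`np`. -/
def IsJordanBlock {d : ℕ} (B : Matrix (Fin d) (Fin d) ℝ) (ρ : ℝ) (np : ℕ) : Prop :=
  (d = np ∧ ∃ lam : ℝ, |lam| = ρ ∧ B = realJordanBlock d lam) ∨
  (∃ h : d = 2 * np, ∃ a b : ℝ, b ≠ 0 ∧ Real.sqrt (a ^ 2 + b ^ 2) = ρ ∧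
      B = Matrix.reindex (finCongr h).symm (finCongr h).symm (complexJordanBlock np a b))

/-- The index identification `(Σ p, Fin (d p)) ≃ Fin n` respects the block order
(lexicographic order on the sigma type). -/
def IsJordanArrangement {n s : ℕ} (d : Fin s → ℕ)
    (e : ((p : Fin s) × Fin (d p)) ≃ Fin n) : Prop :=
  ∀ x y : (p : Fin s) × Fin (d p), Sigma.Lex (· < ·) (fun _ => (· < ·)) x y → e x < e y

/-- `J` is a real Jordan-type matrix: a block diagonal matrix with real Jordan-type
blocks whose eigenvalue moduli are `ρ 0 < ρ 1 < ⋯`, all `> 1`. -/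
def IsRealJordanLike {n s : ℕ} (J : Matrix (Fin n) (Fin n) ℝ) (ρ : Fin s → ℝ) : Prop :=
  (∀ p, 1 < ρ p) ∧ StrictMono ρ ∧
  ∃ (d np : Fin s → ℕ) (B : ∀ p, Matrix (Fin (d p)) (Fin (d p)) ℝ)
    (e : ((p : Fin s) × Fin (d p)) ≃ Fin n),
    (∀ p, 0 < np p) ∧ (∀ p, IsJordanBlock (B p) (ρ p) (np p)) ∧
    IsJordanArrangement d e ∧
    J = Matrix.reindex e e (Matrix.blockDiagonal' B)

/-- Perturbation data for an integer matrix `T`: an invertible real matrix `P` such that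
`J = P⁻¹ T P` is a real Jordan-type matrix and distinct points of the lattice `P⁻¹ ℤ^n`
are at distance `> n`. -/
def IsPerturbationData {n s : ℕ} (T : Matrix (Fin n) (Fin n) ℤ)
    (P : Matrix (Fin n) (Fin n) ℝ) (ρ : Fin s → ℝ) : Prop :=
  IsUnit P ∧ IsRealJordanLike (P⁻¹ * intMat T * P) ρ ∧
    ∀ v w : Fin n → ℤ, v ≠ w →
      (n : ℝ) < ‖euc (P⁻¹ *ᵥ zVec v - P⁻¹ *ᵥ zVec w)‖

/-- The digit sets `Ã_k = P⁻¹ A_k`. -/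
def tildeDigits {n : ℕ} (T : Matrix (Fin n) (Fin n) ℤ) (A : Set (Fin n → ℤ))
    (P : Matrix (Fin n) (Fin n) ℝ) (k : ℕ) : Set (Fin n → ℝ) :=
  (fun a => P⁻¹ *ᵥ zVec a) '' digitSetIter T A k

/-- The perturbed digit sets `D_k = ⌊Ã_k⌋±`. -/
def pertDigits {n : ℕ} (T : Matrix (Fin n) (Fin n) ℤ) (A : Set (Fin n → ℤ))
    (P : Matrix (Fin n) (Fin n) ℝ) (k : ℕ) : Set (Fin n → ℤ) :=
  sfloorVec '' tildeDigits T A P k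

/-- `N(S, δ)`: the smallest number of sets of diameter at most `δ` needed to cover `S`. -/
def coverNum {n : ℕ} (S : Set (EuclideanSpace ℝ (Fin n))) (δ : ℝ) : ℕ :=
  sInf { m : ℕ | ∃ C : Fin m → Set (EuclideanSpace ℝ (Fin n)),
    (∀ i, Metric.diam (C i) ≤ δ) ∧ S ⊆ ⋃ i, C i }

/-- The lower box dimension. -/
def lowerBoxDim {n : ℕ} (S : Set (EuclideanSpace ℝ (Fin n))) : ℝ :=
  liminf (fun δ : ℝ => Real.log (coverNum S δ) / Real.log (1 / δ)) (𝓝[>] (0 : ℝ))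

/-- The upper box dimension. -/
def upperBoxDim {n : ℕ} (S : Set (EuclideanSpace ℝ (Fin n))) : ℝ :=
  limsup (fun δ : ℝ => Real.log (coverNum S δ) / Real.log (1 / δ)) (𝓝[>] (0 : ℝ))

/-- The integer lattice `ℤ^n` inside Euclidean space. -/
def intLattice (n : ℕ) : AddSubgroup (EuclideanSpace ℝ (Fin n)) where
  carrier := { v | ∀ i, ∃ m : ℤ, v i = (m : ℝ) }
  zero_mem' := fun i => ⟨0, by simp⟩
  add_mem' := by
    intro a b ha hb i
    obtain ⟨ma, hma⟩ := ha i
    obtain ⟨mb, hmb⟩ := hb i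
    exact ⟨ma + mb, by push_cast; rw [← hma, ← hmb]; rfl⟩
  neg_mem' := by
    intro a ha i
    obtain ⟨ma, hma⟩ := ha i
    exact ⟨-ma, by push_cast; rw [← hma]; rfl⟩

theorem intLattice_isClosed (n : ℕ) :
    IsClosed ((intLattice n : Set (EuclideanSpace ℝ (Fin n)))) := by
  have h : (intLattice n : Set (EuclideanSpace ℝ (Fin n))) =
      ⋂ i, (fun v : EuclideanSpace ℝ (Fin n) => v i) ⁻¹'
        (Set.range (fun m : ℤ => (m : ℝ))) := by
    ext v
    simp only [Set.mem_iInter, Set.mem_preimage, Set.mem_range]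
    constructor
    · intro hv i; obtain ⟨m, hm⟩ := hv i; exact ⟨m, hm.symm⟩
    · intro hv i; obtain ⟨m, hm⟩ := hv i; exact ⟨m, hm.symm⟩
  rw [h]
  exact isClosed_iInter fun i =>
    (Int.isClosedEmbedding_coe_real.isClosed_range).preimage
      (EuclideanSpace.proj (𝕜 := ℝ) i).continuous

/-- The `n`-torus `ℝ^n / ℤ^n` (with the quotient metric). -/
abbrev Torus (n : ℕ) := EuclideanSpace ℝ (Fin n) ⧸ intLattice n

noncomputable instance (n : ℕ) : NormedAddCommGroup (Torus n) :=
  have : IsClosed ((intLattice n : Set (EuclideanSpace ℝ (Fin n)))) := intLattice_isClosed n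
  QuotientAddGroup.instNormedAddCommGroup (S := intLattice n)

instance (n : ℕ) : MeasurableSpace (Torus n) := borel _
instance (n : ℕ) : BorelSpace (Torus n) := ⟨rfl⟩

/-- The quotient map `ℝ^n → 𝕋^n`. -/
def tproj (n : ℕ) : EuclideanSpace ℝ (Fin n) → Torus n := QuotientAddGroup.mk

/-- Multiplication by a matrix as an additive homomorphism of Euclidean space. -/
def mulVecAddHom {n : ℕ} (M : Matrix (Fin n) (Fin n) ℝ) :
    EuclideanSpace ℝ (Fin n) →+ EuclideanSpace ℝ (Fin n) where
  toFun v := euc (M *ᵥ v)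
  map_zero' := by
    show euc (M *ᵥ (0 : Fin n → ℝ)) = 0
    simp [euc]
  map_add' x y := by
    show euc (M *ᵥ ((x : Fin n → ℝ) + (y : Fin n → ℝ))) = _
    rw [Matrix.mulVec_add]
    rfl

theorem intLattice_le_comap {n : ℕ} (T : Matrix (Fin n) (Fin n) ℤ) :
    intLattice n ≤ (intLattice n).comap (mulVecAddHom (intMat T)) := by
  intro v hv
  intro i
  choose m hm using hv
  refine ⟨∑ j, T i j * m j, ?_⟩
  show (intMat T *ᵥ (v : Fin n → ℝ)) i = _
  simp only [intMat, Matrix.mulVec, dotProduct, Matrix.map_apply]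
  push_cast
  refine Finset.sum_congr rfl fun j _ => ?_
  rw [hm j]

/-- The toral endomorphism induced by an integer matrix `T`, determined by
`φ_T (π x) = π (T x)`. -/
def torusMap {n : ℕ} (T : Matrix (Fin n) (Fin n) ℤ) : Torus n → Torus n :=
  QuotientAddGroup.map (intLattice n) (intLattice n) (mulVecAddHom (intMat T))
    (intLattice_le_comap T)

/-- `μ` is invariant under `f`. -/
def MeasInvariant {α : Type*} [MeasurableSpace α] (f : α → α) (μ : Measure α) : Prop :=
  ∀ B : Set α, MeasurableSet B → μ (f ⁻¹' B) = μ B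

/-- `μ` is an ergodic invariant measure for `f`. -/
def MeasErgodic {α : Type*} [MeasurableSpace α] (f : α → α) (μ : Measure α) : Prop :=
  MeasInvariant f μ ∧ ∀ B : Set α, MeasurableSet B → f ⁻¹' B = B → μ B = 0 ∨ μ B = 1

/-- The (Euclidean) operator norm of a real matrix. -/
def opNorm {n : ℕ} (M : Matrix (Fin n) (Fin n) ℝ) : ℝ :=
  sSup { t : ℝ | ∃ v : EuclideanSpace ℝ (Fin n), ‖v‖ ≤ 1 ∧ t = ‖euc (M *ᵥ v)‖ }

/-- The smallest modulus of a complex eigenvalue of an integer matrix. -/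
def minMod {n : ℕ} (M : Matrix (Fin n) (Fin n) ℤ) : ℝ :=
  sInf { r : ℝ | ∃ μ : ℂ, (M.map fun x => (x : ℂ)).charpoly.IsRoot μ ∧ r = ‖μ‖ }

/-- The largest modulus of a complex eigenvalue of an integer matrix. -/
def maxMod {n : ℕ} (M : Matrix (Fin n) (Fin n) ℤ) : ℝ :=
  sSup { r : ℝ | ∃ μ : ℂ, (M.map fun x => (x : ℂ)).charpoly.IsRoot μ ∧ r = ‖μ‖ }

/-- A similarity matrix: a positive multiple of an orthogonal matrix. -/
def IsSimilarityMatrix {n : ℕ} (S : Matrix (Fin n) (Fin n) ℝ) : Prop :=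
  ∃ c : ℝ, 0 < c ∧ ∃ O : Matrix (Fin n) (Fin n) ℝ, Oᵀ * O = 1 ∧ S = c • O

/-!
Suppose `‖λ‖ ^ m = q ∈ ℚ`. If `n = 2` and `λ` is not real, `T` is `‖λ‖` times an orthogonal
matrix in the basis `Re v, Im v`, for `v` an eigenvector of `λ`. Otherwise some real root `t` of
`χ_T` has `t ^ m ∈ ℚ`: `λ` itself, or for `n = 3` the remaining root `ν = tr T - 2 Re λ`, because
`det T = ‖λ‖² ν` gives `ν ^ m = (det T) ^ m / q²`. The roots of the irreducible `χ_T` are distinct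
and conjugate over `ℚ`, so all of them satisfy `X ^ m = t ^ m` and have modulus `|t|`. For `n = 2`
the roots are then `±t`, and `T² = t² I` by Cayley–Hamilton. For `n = 3` they are `t, σ, σ̄` with
`σ` not real, and `T` is `|t|` times an orthogonal matrix in the basis `u, Re v, Im v`, for `u`
and `v` eigenvectors of `t` and `σ`.
-/

section RationalRelations

open Polynomial

variable {p : ℤ[X]}

theorem irreducible_map_rat (hp : p.Monic) (hirr : Irreducible p) :
    Irreducible (p.map (Int.castRingHom ℚ)) := by
  simpa only [algebraMap_int_eq] using
    (hp.irreducible_iff_irreducible_map_fraction_map (K := ℚ)).mp hirr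

theorem map_rat_map_complex (p : ℤ[X]) :
    (p.map (Int.castRingHom ℚ)).map (algebraMap ℚ ℂ) = p.map (Int.castRingHom ℂ) := by
  rw [Polynomial.map_map]
  congr 1

theorem nodup_roots_map_complex (hp : p.Monic) (hirr : Irreducible p) :
    (p.map (Int.castRingHom ℂ)).roots.Nodup := by
  rw [← map_rat_map_complex]
  exact nodup_roots (irreducible_map_rat hp hirr).separable.map

theorem aeval_eq_zero_of_isRoot (hp : p.Monic) (hirr : Irreducible p) {α β : ℂ}
    (hα : (p.map (Int.castRingHom ℂ)).IsRoot α) (hβ : (p.map (Int.castRingHom ℂ)).IsRoot β)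
    {q : ℚ[X]} (hq : aeval α q = 0) : aeval β q = 0 := by
  have hmin : ∀ z : ℂ, (p.map (Int.castRingHom ℂ)).IsRoot z →
      minpoly ℚ z = p.map (Int.castRingHom ℚ) := fun z hz =>
    (minpoly.eq_of_irreducible_of_monic (irreducible_map_rat hp hirr)
      (by rwa [aeval_def, ← eval_map, map_rat_map_complex]) (hp.map _)).symm
  have hdvd : minpoly ℚ β ∣ q := by
    rw [hmin β hβ, ← hmin α hα]
    exact minpoly.dvd ℚ α hq
  exact aeval_eq_zero_of_dvd_aeval_eq_zero hdvd (minpoly.aeval ℚ β)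

theorem norm_eq_of_isRoot_of_pow_eq_ratCast (hp : p.Monic) (hirr : Irreducible p) {α β : ℂ}
    (hα : (p.map (Int.castRingHom ℂ)).IsRoot α) (hβ : (p.map (Int.castRingHom ℂ)).IsRoot β)
    {m : ℕ} (hm : m ≠ 0) {c : ℚ} (hc : α ^ m = c) : ‖β‖ = ‖α‖ := by
  have hβc : β ^ m = c := by
    have h := aeval_eq_zero_of_isRoot hp hirr hα hβ (q := X ^ m - C c) (by simp [hc])
    simpa [sub_eq_zero] using h
  rw [← pow_left_inj₀ (norm_nonneg _) (norm_nonneg _) hm, ← norm_pow, ← norm_pow, hβc, hc]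

theorem exists_ofReal_pow_eq_ratCast {t : ℝ} {m : ℕ} {q : ℚ} (hq : (q : ℝ) = |t| ^ m) :
    ∃ c : ℚ, (t : ℂ) ^ m = c := by
  rw [← abs_pow] at hq
  rcases abs_choice (t ^ m) with h | h
  · exact ⟨q, by exact_mod_cast (hq.trans h).symm⟩
  · exact ⟨-q, by push_cast; exact_mod_cast (by linarith : t ^ m = -(q : ℝ))⟩

end RationalRelations

section Eigenvectors

theorem exists_mulVec_eq_smul_of_isRoot_charpoly {K ι : Type*} [Field K] [Fintype ι]
    [DecidableEq ι] (A : Matrix ι ι K) {μ : K} (h : A.charpoly.IsRoot μ) :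
    ∃ v ≠ 0, A *ᵥ v = μ • v := by
  rw [← Matrix.charpoly_toLin', ← Module.End.hasEigenvalue_iff_isRoot_charpoly] at h
  obtain ⟨v, hv⟩ := h.exists_hasEigenvector
  exact ⟨v, hv.2, by simpa using hv.apply_eq_smul⟩

theorem isUnit_of_rows_eigenvectors {K ι : Type*} [Field K] [Fintype ι] [DecidableEq ι]
    (A : Matrix ι ι K) {f : ι → K} (hf : Function.Injective f) {w : ι → ι → K}
    (hw0 : ∀ i, w i ≠ 0) (hw : ∀ i, A *ᵥ w i = f i • w i) : IsUnit (Matrix.of w) :=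
  linearIndependent_rows_iff_isUnit.mp <|
    Module.End.eigenvectors_linearIndependent' A.toLin' f hf w fun i =>
      ⟨Module.End.mem_eigenspace_iff.mpr (by simpa using hw i), hw0 i⟩

variable {N : ℕ} {M : Matrix (Fin N) (Fin N) ℝ}

theorem isRoot_charpoly_map_ofReal_iff {t : ℝ} :
    (M.map ((↑) : ℝ → ℂ)).charpoly.IsRoot t ↔ M.charpoly.IsRoot t := by
  rw [show (M.map ((↑) : ℝ → ℂ)) = M.map (algebraMap ℝ ℂ) from rfl, charpoly_map]
  exact Polynomial.isRoot_map_iff (algebraMap ℝ ℂ).injective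

theorem isRoot_charpoly_map_ofReal_conj {μ : ℂ} (h : (M.map ((↑) : ℝ → ℂ)).charpoly.IsRoot μ) :
    (M.map ((↑) : ℝ → ℂ)).charpoly.IsRoot (starRingEnd ℂ μ) := by
  rw [show (M.map ((↑) : ℝ → ℂ)) = M.map (algebraMap ℝ ℂ) from rfl, charpoly_map,
    Polynomial.IsRoot, Polynomial.eval_map_algebraMap] at h ⊢
  rw [Polynomial.aeval_conj, h, map_zero]

variable {v : Fin N → ℂ} {μ : ℂ}

theorem mulVec_star_of_mulVec_eq_smul (hv : M.map ((↑) : ℝ → ℂ) *ᵥ v = μ • v) :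
    M.map ((↑) : ℝ → ℂ) *ᵥ star v = starRingEnd ℂ μ • star v := by
  funext i
  simpa [Matrix.mulVec, dotProduct, map_sum] using congrArg (starRingEnd ℂ) (congrFun hv i)

theorem mulVec_re_of_mulVec_eq_smul (hv : M.map ((↑) : ℝ → ℂ) *ᵥ v = μ • v) :
    M *ᵥ (fun i => (v i).re) = μ.re • (fun i => (v i).re) - μ.im • (fun i => (v i).im) := by
  funext i
  simpa [Matrix.mulVec, dotProduct, Complex.re_sum] using congrArg Complex.re (congrFun hv i)

theorem mulVec_im_of_mulVec_eq_smul (hv : M.map ((↑) : ℝ → ℂ) *ᵥ v = μ • v) :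
    M *ᵥ (fun i => (v i).im) = μ.im • (fun i => (v i).re) + μ.re • (fun i => (v i).im) := by
  funext i
  simpa [Matrix.mulVec, dotProduct, Complex.im_sum, add_comm] using
    congrArg Complex.im (congrFun hv i)

end Eigenvectors

section Similarity

def IsConjToSimilarity {N : ℕ} (M : Matrix (Fin N) (Fin N) ℝ) : Prop :=
  ∃ Q : Matrix (Fin N) (Fin N) ℝ, IsUnit Q ∧ IsSimilarityMatrix (Q⁻¹ * M * Q)

variable {N : ℕ}

theorem isSimilarityMatrix_of_transpose_mul_self {D : Matrix (Fin N) (Fin N) ℝ} {c : ℝ}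
    (hc : 0 < c) (h : Dᵀ * D = c ^ 2 • 1) : IsSimilarityMatrix D := by
  refine ⟨c, hc, c⁻¹ • D, ?_, by rw [smul_smul, mul_inv_cancel₀ hc.ne', one_smul]⟩
  rw [transpose_smul, Matrix.smul_mul, Matrix.mul_smul, h, smul_smul, smul_smul,
    show c⁻¹ * c⁻¹ * c ^ 2 = 1 by field_simp, one_smul]

theorem IsConjToSimilarity.of_mul_eq_mul {M Q D : Matrix (Fin N) (Fin N) ℝ} (hQ : IsUnit Q)
    (hD : IsSimilarityMatrix D) (h : M * Q = Q * D) : IsConjToSimilarity M :=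
  ⟨Q, hQ, by rwa [Matrix.mul_assoc, h, nonsing_inv_mul_cancel_left _ _
    ((isUnit_iff_isUnit_det Q).mp hQ)]⟩

theorem isConjToSimilarity_smul_one {c : ℝ} (hc : 0 < c) :
    IsConjToSimilarity (c • (1 : Matrix (Fin N) (Fin N) ℝ)) :=
  ⟨1, isUnit_one, c, hc, 1, by simp, by simp⟩

theorem isUnit_of_isUnit_mul_map_ofReal {S : Matrix (Fin N) (Fin N) ℂ}
    {R : Matrix (Fin N) (Fin N) ℝ} (h : IsUnit (S * R.map ((↑) : ℝ → ℂ))) : IsUnit R := by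
  rw [isUnit_iff_isUnit_det, det_mul] at h
  have hR := isUnit_of_mul_isUnit_right h
  rw [isUnit_iff_isUnit_det, isUnit_iff_ne_zero]
  rw [show (R.map ((↑) : ℝ → ℂ)).det = R.det from (RingHom.map_det Complex.ofRealHom R).symm,
    isUnit_iff_ne_zero] at hR
  exact_mod_cast hR

theorem mul_transpose_of_mulVec_eq_sum {M D : Matrix (Fin N) (Fin N) ℝ}
    {w : Fin N → Fin N → ℝ} (h : ∀ j, M *ᵥ w j = ∑ k, D k j • w k) :
    M * (Matrix.of w)ᵀ = (Matrix.of w)ᵀ * D := by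
  ext i j
  simpa [Matrix.mul_apply, Matrix.mulVec, dotProduct, Finset.sum_apply, mul_comm] using
    congrFun (h j) i

theorem isUnit_of_re_im_of_mulVec_eq_smul {M : Matrix (Fin 2) (Fin 2) ℝ} {v : Fin 2 → ℂ} {μ : ℂ}
    (hv0 : v ≠ 0) (hv : M.map ((↑) : ℝ → ℂ) *ᵥ v = μ • v) (him : μ.im ≠ 0) :
    IsUnit (Matrix.of ![fun i => (v i).re, fun i => (v i).im]) := by
  refine isUnit_of_isUnit_mul_map_ofReal (S := !![1, Complex.I; 1, -Complex.I]) ?_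
  have hrows : !![1, Complex.I; 1, -Complex.I] *
      (Matrix.of ![fun i => (v i).re, fun i => (v i).im]).map ((↑) : ℝ → ℂ) =
      Matrix.of ![v, star v] := by
    ext i j
    fin_cases i <;> simp [Matrix.mul_apply, Complex.ext_iff]
  rw [hrows]
  refine isUnit_of_rows_eigenvectors (M.map ((↑) : ℝ → ℂ)) (f := ![μ, starRingEnd ℂ μ]) ?_ ?_ ?_
  · intro i j hij
    fin_cases i <;> fin_cases j <;> simp [Complex.ext_iff] at hij ⊢ <;> exact him (by linarith)
  · intro i
    fin_cases i <;> simpa using hv0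
  · intro i
    fin_cases i
    · simpa using hv
    · simpa using mulVec_star_of_mulVec_eq_smul hv

theorem isConjToSimilarity_of_isRoot_im_ne_zero {M : Matrix (Fin 2) (Fin 2) ℝ} {μ : ℂ}
    (hμ : (M.map ((↑) : ℝ → ℂ)).charpoly.IsRoot μ) (him : μ.im ≠ 0) :
    IsConjToSimilarity M := by
  obtain ⟨v, hv0, hv⟩ := exists_mulVec_eq_smul_of_isRoot_charpoly _ hμ
  have hμ0 : 0 < ‖μ‖ := norm_pos_iff.mpr fun h => him (by simp [h])
  refine IsConjToSimilarity.of_mul_eq_mul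
    ((isUnit_transpose _).mpr (isUnit_of_re_im_of_mulVec_eq_smul hv0 hv him))
    (D := !![μ.re, μ.im; -μ.im, μ.re]) (isSimilarityMatrix_of_transpose_mul_self hμ0 ?_)
    (mul_transpose_of_mulVec_eq_sum fun j => ?_)
  · ext i j
    fin_cases i <;> fin_cases j <;>
      simp [Matrix.mul_apply, Complex.sq_norm, Complex.normSq_apply] <;> ring
  · fin_cases j
    · simpa [sub_eq_add_neg] using mulVec_re_of_mulVec_eq_smul hv
    · simpa using mulVec_im_of_mulVec_eq_smul hv

theorem isUnit_of_real_re_im_of_mulVec_eq_smul {M : Matrix (Fin 3) (Fin 3) ℝ} {u : Fin 3 → ℝ}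
    {t : ℝ} (hu0 : u ≠ 0) (hu : M *ᵥ u = t • u) {v : Fin 3 → ℂ} {μ : ℂ} (hv0 : v ≠ 0)
    (hv : M.map ((↑) : ℝ → ℂ) *ᵥ v = μ • v) (him : μ.im ≠ 0) :
    IsUnit (Matrix.of ![u, fun i => (v i).re, fun i => (v i).im]) := by
  refine isUnit_of_isUnit_mul_map_ofReal
    (S := !![1, 0, 0; 0, 1, Complex.I; 0, 1, -Complex.I]) ?_
  have hrows : !![1, 0, 0; 0, 1, Complex.I; 0, 1, -Complex.I] *
      (Matrix.of ![u, fun i => (v i).re, fun i => (v i).im]).map ((↑) : ℝ → ℂ) =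
      Matrix.of ![fun i => (u i : ℂ), v, star v] := by
    ext i j
    fin_cases i <;> simp [Matrix.mul_apply, Fin.sum_univ_three, Complex.ext_iff]
  rw [hrows]
  refine isUnit_of_rows_eigenvectors (M.map ((↑) : ℝ → ℂ))
    (f := ![(t : ℂ), μ, starRingEnd ℂ μ]) ?_ ?_ ?_
  · intro i j hij
    fin_cases i <;> fin_cases j <;> simp [Complex.ext_iff] at hij ⊢ <;> exact him (by linarith)
  · intro i
    fin_cases i
    · simpa [funext_iff] using hu0
    · simpa using hv0
    · simpa using hv0
  · intro i
    fin_cases i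
    · funext k
      simpa [Matrix.mulVec, dotProduct] using congrArg ((↑) : ℝ → ℂ) (congrFun hu k)
    · simpa using hv
    · simpa using mulVec_star_of_mulVec_eq_smul hv

theorem isConjToSimilarity_of_isRoot_abs_eq_norm {M : Matrix (Fin 3) (Fin 3) ℝ} {t : ℝ} {μ : ℂ}
    (ht : (M.map ((↑) : ℝ → ℂ)).charpoly.IsRoot t)
    (hμ : (M.map ((↑) : ℝ → ℂ)).charpoly.IsRoot μ) (him : μ.im ≠ 0) (habs : |t| = ‖μ‖) :
    IsConjToSimilarity M := by
  obtain ⟨u, hu0, hu⟩ :=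
    exists_mulVec_eq_smul_of_isRoot_charpoly _ (isRoot_charpoly_map_ofReal_iff.mp ht)
  obtain ⟨v, hv0, hv⟩ := exists_mulVec_eq_smul_of_isRoot_charpoly _ hμ
  have hμ0 : 0 < ‖μ‖ := norm_pos_iff.mpr fun h => him (by simp [h])
  have ht2 : t ^ 2 = μ.re ^ 2 + μ.im ^ 2 := by
    rw [← sq_abs, habs, Complex.sq_norm, Complex.normSq_apply]
    ring
  refine IsConjToSimilarity.of_mul_eq_mul
    ((isUnit_transpose _).mpr (isUnit_of_real_re_im_of_mulVec_eq_smul hu0 hu hv0 hv him))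
    (D := !![t, 0, 0; 0, μ.re, μ.im; 0, -μ.im, μ.re])
    (isSimilarityMatrix_of_transpose_mul_self hμ0 ?_) (mul_transpose_of_mulVec_eq_sum fun j => ?_)
  · ext i j
    fin_cases i <;> fin_cases j <;>
      simp [Matrix.mul_apply, Fin.sum_univ_three, Complex.sq_norm, Complex.normSq_apply] <;>
      first | linear_combination ht2 | ring
  · fin_cases j
    · simpa [Fin.sum_univ_three] using hu
    · simpa [Fin.sum_univ_three, sub_eq_add_neg] using mulVec_re_of_mulVec_eq_smul hv
    · simpa [Fin.sum_univ_three] using mulVec_im_of_mulVec_eq_smul hv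

end Similarity

section IntegerMatrix

open Polynomial

variable {n : ℕ}

theorem intMat_map_ofReal (T : Matrix (Fin n) (Fin n) ℤ) :
    (intMat T).map ((↑) : ℝ → ℂ) = T.map ((↑) : ℤ → ℂ) := by
  ext i j
  simp [intMat]

theorem charpoly_map_intCast (T : Matrix (Fin n) (Fin n) ℤ) :
    (T.map ((↑) : ℤ → ℂ)).charpoly = T.charpoly.map (Int.castRingHom ℂ) := by
  simpa using charpoly_map T (Int.castRingHom ℂ)

theorem card_roots_charpoly_map_intCast (T : Matrix (Fin n) (Fin n) ℤ) :
    Multiset.card (T.map ((↑) : ℤ → ℂ)).charpoly.roots = n := by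
  rw [IsAlgClosed.card_roots_eq_natDegree, charpoly_natDegree_eq_dim, Fintype.card_fin]

theorem sum_roots_charpoly_map_intCast (T : Matrix (Fin n) (Fin n) ℤ) :
    (T.map ((↑) : ℤ → ℂ)).charpoly.roots.sum = T.trace := by
  rw [← trace_eq_sum_roots_charpoly]
  exact (AddMonoidHom.map_trace (Int.castRingHom ℂ) T).symm

theorem prod_roots_charpoly_map_intCast (T : Matrix (Fin n) (Fin n) ℤ) :
    (T.map ((↑) : ℤ → ℂ)).charpoly.roots.prod = T.det := by
  rw [← det_eq_prod_roots_charpoly]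
  exact (RingHom.map_det (Int.castRingHom ℂ) T).symm

variable {T : Matrix (Fin n) (Fin n) ℤ}

theorem mem_roots_charpoly_map_intCast {z : ℂ} :
    z ∈ (T.map ((↑) : ℤ → ℂ)).charpoly.roots ↔ (T.map ((↑) : ℤ → ℂ)).charpoly.IsRoot z :=
  mem_roots (charpoly_monic _).ne_zero

theorem nodup_roots_charpoly_map_intCast (hirr : Irreducible T.charpoly) :
    (T.map ((↑) : ℤ → ℂ)).charpoly.roots.Nodup := by
  rw [charpoly_map_intCast]
  exact nodup_roots_map_complex (charpoly_monic T) hirr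

theorem norm_eq_abs_of_pow_eq_ratCast (hirr : Irreducible T.charpoly) {t : ℝ}
    (ht : (T.map ((↑) : ℤ → ℂ)).charpoly.IsRoot t) {m : ℕ} (hm : m ≠ 0) {c : ℚ}
    (hc : (t : ℂ) ^ m = c) {β : ℂ} (hβ : (T.map ((↑) : ℤ → ℂ)).charpoly.IsRoot β) :
    ‖β‖ = |t| := by
  rw [charpoly_map_intCast] at ht hβ
  simpa using norm_eq_of_isRoot_of_pow_eq_ratCast (charpoly_monic T) hirr ht hβ hm hc

end IntegerMatrix

section Dimension2

theorem sq_eq_neg_det_smul_one_of_trace_eq_zero {R : Type*} [CommRing R] [Nontrivial R]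
    (M : Matrix (Fin 2) (Fin 2) R) (h : M.trace = 0) :
    M ^ 2 = (-M.det) • (1 : Matrix (Fin 2) (Fin 2) R) := by
  have hCH := aeval_self_charpoly M
  rw [charpoly_fin_two, h] at hCH
  simpa [Algebra.algebraMap_eq_smul_one, add_eq_zero_iff_eq_neg] using hCH

variable {T : Matrix (Fin 2) (Fin 2) ℤ}

theorem roots_charpoly_eq_pair_neg (hirr : Irreducible T.charpoly) {t : ℝ}
    (ht : (T.map ((↑) : ℤ → ℂ)).charpoly.IsRoot t)
    (hall : ∀ β, (T.map ((↑) : ℤ → ℂ)).charpoly.IsRoot β → ‖β‖ = |t|) :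
    t ≠ 0 ∧ (T.map ((↑) : ℤ → ℂ)).charpoly.roots = {(t : ℂ), -(t : ℂ)} := by
  obtain ⟨s, hs⟩ := Multiset.exists_cons_of_mem (mem_roots_charpoly_map_intCast.mpr ht)
  obtain ⟨b, rfl⟩ : ∃ b, s = {b} := Multiset.card_eq_one.mp <| by
    simpa [hs] using card_roots_charpoly_map_intCast T
  have hbt : b ≠ t := by
    have hnd := nodup_roots_charpoly_map_intCast hirr
    rw [hs] at hnd
    simpa [eq_comm] using hnd
  have hb_im : b.im = 0 := by
    simpa [hs] using congrArg Complex.im (sum_roots_charpoly_map_intCast T)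
  have hb : b = -t := by
    obtain ⟨r, rfl⟩ := Complex.conj_eq_iff_real.mp (Complex.conj_eq_iff_im.mpr hb_im)
    have hr := hall r (mem_roots_charpoly_map_intCast.mp (by simp [hs]))
    rw [Complex.norm_real, Real.norm_eq_abs] at hr
    rcases abs_eq_abs.mp hr with h | h
    · exact absurd (by rw [h]) hbt
    · simp [h]
  exact ⟨fun h0 => hbt (by simp [hb, h0]), by rw [hs, hb]; rfl⟩

theorem isConjToSimilarity_intMat_sq (hirr : Irreducible T.charpoly) {t : ℝ}
    (ht : (T.map ((↑) : ℤ → ℂ)).charpoly.IsRoot t)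
    (hall : ∀ β, (T.map ((↑) : ℤ → ℂ)).charpoly.IsRoot β → ‖β‖ = |t|) :
    IsConjToSimilarity (intMat (T ^ 2)) := by
  obtain ⟨ht0, hroots⟩ := roots_charpoly_eq_pair_neg hirr ht hall
  have htr : T.trace = 0 := by
    have h := sum_roots_charpoly_map_intCast T
    rw [hroots] at h
    exact_mod_cast (by simpa using h.symm : (T.trace : ℂ) = 0)
  have hdet : (T.det : ℝ) = -t ^ 2 := by
    have h := prod_roots_charpoly_map_intCast T
    rw [hroots] at h
    apply Complex.ofReal_injective
    rw [Complex.ofReal_intCast, Complex.ofReal_neg, Complex.ofReal_pow]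
    simpa [sq] using h.symm
  have hsq : intMat (T ^ 2) = ((-T.det : ℤ) : ℝ) • 1 := by
    rw [sq_eq_neg_det_smul_one_of_trace_eq_zero T htr]
    ext i j
    by_cases h : i = j <;> simp [intMat, Matrix.intCast_apply, h]
  rw [hsq]
  exact isConjToSimilarity_smul_one <| by
    rw [Int.cast_neg, hdet, neg_neg]
    exact pow_two_pos_of_ne_zero ht0

end Dimension2

section Dimension3

variable {T : Matrix (Fin 3) (Fin 3) ℤ}

theorem exists_isRoot_im_ne_zero (hirr : Irreducible T.charpoly) {t : ℝ}
    (hall : ∀ β, (T.map ((↑) : ℤ → ℂ)).charpoly.IsRoot β → ‖β‖ = |t|) :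
    ∃ σ, (T.map ((↑) : ℤ → ℂ)).charpoly.IsRoot σ ∧ σ.im ≠ 0 := by
  by_contra! hreal
  have hsub : (T.map ((↑) : ℤ → ℂ)).charpoly.roots.toFinset ⊆ {(t : ℂ), -(t : ℂ)} := by
    intro β hβ
    rw [Multiset.mem_toFinset, mem_roots_charpoly_map_intCast] at hβ
    obtain ⟨s, rfl⟩ := Complex.conj_eq_iff_real.mp (Complex.conj_eq_iff_im.mpr (hreal β hβ))
    have hs := hall s hβ
    rw [Complex.norm_real, Real.norm_eq_abs] at hs
    rcases abs_eq_abs.mp hs with h | h <;> simp [h]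
  have hcard := Finset.card_le_card hsub
  rw [Multiset.toFinset_card_of_nodup (nodup_roots_charpoly_map_intCast hirr),
    card_roots_charpoly_map_intCast] at hcard
  exact absurd (hcard.trans Finset.card_le_two) (by norm_num)

theorem exists_real_isRoot_pow_eq_ratCast {μ : ℂ}
    (hμ : (T.map ((↑) : ℤ → ℂ)).charpoly.IsRoot μ) (him : μ.im ≠ 0) {m : ℕ} {q : ℚ}
    (hq : (q : ℝ) = ‖μ‖ ^ m) :
    ∃ t : ℝ, (T.map ((↑) : ℤ → ℂ)).charpoly.IsRoot t ∧ ∃ c : ℚ, (t : ℂ) ^ m = c := by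
  have hμ' : (T.map ((↑) : ℤ → ℂ)).charpoly.IsRoot (starRingEnd ℂ μ) := by
    rw [← intMat_map_ofReal] at hμ ⊢
    exact isRoot_charpoly_map_ofReal_conj hμ
  obtain ⟨s, hs⟩ := Multiset.exists_cons_of_mem (mem_roots_charpoly_map_intCast.mpr hμ)
  have hμ's : starRingEnd ℂ μ ∈ s := by
    have h := mem_roots_charpoly_map_intCast.mpr hμ'
    rw [hs, Multiset.mem_cons] at h
    exact h.resolve_left fun h => him (Complex.conj_eq_iff_im.mp h)
  obtain ⟨s', hs'⟩ := Multiset.exists_cons_of_mem hμ's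
  obtain ⟨ν, rfl⟩ : ∃ ν, s' = {ν} := Multiset.card_eq_one.mp <| by
    simpa [hs, hs'] using card_roots_charpoly_map_intCast T
  have hν_im : ν.im = 0 := by
    simpa [hs, hs'] using congrArg Complex.im (sum_roots_charpoly_map_intCast T)
  obtain ⟨t, rfl⟩ := Complex.conj_eq_iff_real.mp (Complex.conj_eq_iff_im.mpr hν_im)
  refine ⟨t, mem_roots_charpoly_map_intCast.mp (by simp [hs, hs']), T.det ^ m / q ^ 2, ?_⟩
  have hdet : (T.det : ℂ) = (‖μ‖ : ℂ) ^ 2 * t := by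
    rw [← prod_roots_charpoly_map_intCast, hs, hs']
    simp [← mul_assoc, Complex.mul_conj, Complex.normSq_eq_norm_sq]
  have hqC : (q : ℂ) = (‖μ‖ : ℂ) ^ m := by exact_mod_cast hq
  have hμ0 : (‖μ‖ : ℂ) ≠ 0 := by simpa using fun h => him (by simp [h])
  rw [Rat.cast_div, Rat.cast_pow, Rat.cast_pow, Rat.cast_intCast, hdet, hqC]
  field_simp
  ring

end Dimension3

/-- if `T ∈ M_n(ℤ)` (`n = 2, 3`) has irreducible characteristic polynomial and
no power `T^j` (`1 ≤ j ≤ n`) is conjugate over `ℝ` to a similarity matrix, then all positive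
integer powers of the moduli of the eigenvalues of `T` are irrational. -/
theorem eigenvalue_modulus_powers_irrational {n : ℕ} (hn : n = 2 ∨ n = 3)
    (T : Matrix (Fin n) (Fin n) ℤ) (hirr : Irreducible T.charpoly)
    (hsim : ∀ j : ℕ, 1 ≤ j → j ≤ n →
      ¬ ∃ Q : Matrix (Fin n) (Fin n) ℝ, IsUnit Q ∧
          IsSimilarityMatrix (Q⁻¹ * intMat (T ^ j) * Q)) :
    ∀ μ : ℂ, (T.map fun x => (x : ℂ)).charpoly.IsRoot μ →
      ∀ m : ℕ, 1 ≤ m → Irrational (‖μ‖ ^ m) := by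
  rintro μ hμ m hm ⟨q, hq⟩
  have hT : ¬ IsConjToSimilarity (intMat T) := by
    rw [← pow_one T]
    exact hsim 1 le_rfl (by omega)
  rcases hn with rfl | rfl
  · by_cases him : μ.im = 0
    · obtain ⟨t, rfl⟩ := Complex.conj_eq_iff_real.mp (Complex.conj_eq_iff_im.mpr him)
      obtain ⟨c, hc⟩ := exists_ofReal_pow_eq_ratCast (by simpa using hq)
      exact hsim 2 one_le_two le_rfl <| isConjToSimilarity_intMat_sq hirr hμ fun β hβ =>
        norm_eq_abs_of_pow_eq_ratCast hirr hμ (by omega) hc hβ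
    · rw [← intMat_map_ofReal] at hμ
      exact hT (isConjToSimilarity_of_isRoot_im_ne_zero hμ him)
  · obtain ⟨t, ht, c, hc⟩ :
        ∃ t : ℝ, (T.map ((↑) : ℤ → ℂ)).charpoly.IsRoot t ∧ ∃ c : ℚ, (t : ℂ) ^ m = c := by
      by_cases him : μ.im = 0
      · obtain ⟨t, rfl⟩ := Complex.conj_eq_iff_real.mp (Complex.conj_eq_iff_im.mpr him)
        exact ⟨t, hμ, exists_ofReal_pow_eq_ratCast (by simpa using hq)⟩
      · exact exists_real_isRoot_pow_eq_ratCast hμ him hq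
    have hall := fun β => norm_eq_abs_of_pow_eq_ratCast hirr ht (by omega) hc (β := β)
    obtain ⟨σ, hσ, hσim⟩ := exists_isRoot_im_ne_zero hirr hall
    have habs := (hall σ hσ).symm
    rw [← intMat_map_ofReal] at ht hσ
    exact hT (isConjToSimilarity_of_isRoot_abs_eq_norm ht hσ hσim habs)

end FracPert
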